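/- arXiv:1710.00533 — 6 statements merged into one kernel-verified Lean document; each statement's English description precedes it below -/
import Mathlib

section
/- Second-variation identity along a constrained family (the key identity in the proofs of Lemma 2.2(3) and Lemma 4.1): Let E be a real normed vector space, W, P1, P2 : E → ℝ twice continuously Fréchet differentiable, I ⊆ ℝ an open interval, b ∈ ℝ. Let f : I → E be twice differentiable and α, β : I → ℝ differentiable, such that for every ã ∈ I one has P1(f(ã)) = ã², P2(f(ã)) = b, and DW(f(ã)) = α(ã)·DP1(f(ã)) + β(ã)·DP2(f(ã)). Then for every ã ∈ I, writing φ := f'(ã), one has D²W(f(ã))(φ,φ) − α(ã)·D²P1(f(ã))(φ,φ) − β(ã)·D²P2(f(ã))(φ,φ) = 2ã·α'(ã). -/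
/-!
Differentiating the constraints `P1 ∘ f = a²` and `P2 ∘ f = b` along the curve gives
`DP1(f) f' = 2a` and `DP2(f) f' = 0`, so the Euler–Lagrange equation yields `DW(f) f' = 2aα`.
Differentiating these three identities once more produces `D²P(f)(f', f') + DP(f) f''` on the
left-hand sides; the Euler–Lagrange equation applied to `f''` cancels the `f''` terms, leaving
the derivative `2aα'` of the right-hand side.
-/

open Filter Topology

section CurveDerivatives

variable {𝕜 : Type*} [NontriviallyNormedField 𝕜]
  {E : Type*} [NormedAddCommGroup E] [NormedSpace 𝕜 E]
  {F : Type*} [NormedAddCommGroup F] [NormedSpace 𝕜 F]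

theorem ContDiff.differentiable_fderiv_of_two {P : E → F} (hP : ContDiff 𝕜 2 P) :
    Differentiable 𝕜 (fderiv 𝕜 P) :=
  (hP.fderiv_right (m := 1) le_rfl).differentiable one_ne_zero

theorem fderiv_apply_eq_of_comp_eventuallyEq {P : E → F} {f : 𝕜 → E} {g : 𝕜 → F}
    {a : 𝕜} {v : E} {g' : F} (hP : DifferentiableAt 𝕜 P (f a)) (hf : HasDerivAt f v a)
    (hg : HasDerivAt g g' a) (h : P ∘ f =ᶠ[𝓝 a] g) :
    fderiv 𝕜 P (f a) v = g' :=
  (hP.hasFDerivAt.comp_hasDerivAt a hf).unique (hg.congr_of_eventuallyEq h)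

theorem fderiv_fderiv_apply_add_eq_of_eventuallyEq {P : E → F} {f f' : 𝕜 → E} {g : 𝕜 → F}
    {a : 𝕜} {w : E} {g' : F} (hP : DifferentiableAt 𝕜 (fderiv 𝕜 P) (f a))
    (hf : HasDerivAt f (f' a) a) (hf' : HasDerivAt f' w a) (hg : HasDerivAt g g' a)
    (h : (fun y => fderiv 𝕜 P (f y) (f' y)) =ᶠ[𝓝 a] g) :
    fderiv 𝕜 (fderiv 𝕜 P) (f a) (f' a) (f' a) + fderiv 𝕜 P (f a) w = g' :=
  ((hP.hasFDerivAt.comp_hasDerivAt a hf).clm_apply hf').unique (hg.congr_of_eventuallyEq h)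

end CurveDerivatives

theorem second_variation_identity_along_constrained_family_general
    {E : Type*} [NormedAddCommGroup E] [NormedSpace ℝ E]
    (W P1 P2 : E → ℝ)
    (hW : ContDiff ℝ 2 W) (hP1 : ContDiff ℝ 2 P1) (hP2 : ContDiff ℝ 2 P2)
    (I : Set ℝ) (hIopen : IsOpen I) (b : ℝ)
    (f f' f'' : ℝ → E) (α β α' : ℝ → ℝ)
    (hf : ∀ a ∈ I, HasDerivAt f (f' a) a)
    (hf' : ∀ a ∈ I, HasDerivAt f' (f'' a) a)
    (hα : ∀ a ∈ I, HasDerivAt α (α' a) a)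
    (hP1f : ∀ a ∈ I, P1 (f a) = a ^ 2)
    (hP2f : ∀ a ∈ I, P2 (f a) = b)
    (hEL : ∀ a ∈ I, fderiv ℝ W (f a)
        = α a • fderiv ℝ P1 (f a) + β a • fderiv ℝ P2 (f a)) :
    ∀ a ∈ I,
      fderiv ℝ (fderiv ℝ W) (f a) (f' a) (f' a)
        - α a * (fderiv ℝ (fderiv ℝ P1) (f a) (f' a) (f' a))
        - β a * (fderiv ℝ (fderiv ℝ P2) (f a) (f' a) (f' a))
      = 2 * a * α' a := by
  intro a ha
  have hI : ∀ y ∈ I, I ∈ 𝓝 y := fun y hy => hIopen.mem_nhds hy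
  have hP1_first : ∀ y ∈ I, fderiv ℝ P1 (f y) (f' y) = 2 * y := fun y hy =>
    fderiv_apply_eq_of_comp_eventuallyEq ((hP1.differentiable two_ne_zero) _) (hf y hy)
      (by simpa using hasDerivAt_pow 2 y) (eventuallyEq_of_mem (hI y hy) hP1f)
  have hP2_first : ∀ y ∈ I, fderiv ℝ P2 (f y) (f' y) = 0 := fun y hy =>
    fderiv_apply_eq_of_comp_eventuallyEq ((hP2.differentiable two_ne_zero) _) (hf y hy)
      (hasDerivAt_const y b) (eventuallyEq_of_mem (hI y hy) hP2f)
  have hW_first : ∀ y ∈ I, fderiv ℝ W (f y) (f' y) = 2 * y * α y := fun y hy => by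
    simp [hEL y hy, hP1_first y hy, hP2_first y hy, mul_comm]
  have hP1_second := fderiv_fderiv_apply_add_eq_of_eventuallyEq
    (hP1.differentiable_fderiv_of_two _) (hf a ha) (hf' a ha)
    ((hasDerivAt_id a).const_mul 2) (eventuallyEq_of_mem (hI a ha) hP1_first)
  have hP2_second := fderiv_fderiv_apply_add_eq_of_eventuallyEq
    (hP2.differentiable_fderiv_of_two _) (hf a ha) (hf' a ha)
    (hasDerivAt_const a 0) (eventuallyEq_of_mem (hI a ha) hP2_first)
  have hW_second := fderiv_fderiv_apply_add_eq_of_eventuallyEq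
    (hW.differentiable_fderiv_of_two _) (hf a ha) (hf' a ha)
    (((hasDerivAt_id a).const_mul 2).mul (hα a ha)) (eventuallyEq_of_mem (hI a ha) hW_first)
  have hEL_f'' : fderiv ℝ W (f a) (f'' a)
      = α a * fderiv ℝ P1 (f a) (f'' a) + β a * fderiv ℝ P2 (f a) (f'' a) := by
    simp [hEL a ha]
  simp only [id, mul_one] at hP1_second hW_second
  linear_combination hW_second - hEL_f'' - α a * hP1_second - β a * hP2_second

/-- Second-variation identity along a constrained family (key identity in the proofs of
Lemma 2.2(3) and Lemma 4.1): with `φ = f'(ã)`,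
`D²W(f(ã))(φ,φ) − α(ã)·D²P1(f(ã))(φ,φ) − β(ã)·D²P2(f(ã))(φ,φ) = 2ã·α'(ã)`. -/
theorem second_variation_identity_along_constrained_family
    {E : Type*} [NormedAddCommGroup E] [NormedSpace ℝ E]
    (W P1 P2 : E → ℝ)
    (hW : ContDiff ℝ 2 W) (hP1 : ContDiff ℝ 2 P1) (hP2 : ContDiff ℝ 2 P2)
    (I : Set ℝ) (hIopen : IsOpen I) (hIconn : I.OrdConnected) (b : ℝ)
    (f f' f'' : ℝ → E) (α β α' β' : ℝ → ℝ)
    (hf : ∀ a ∈ I, HasDerivAt f (f' a) a)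
    (hf' : ∀ a ∈ I, HasDerivAt f' (f'' a) a)
    (hα : ∀ a ∈ I, HasDerivAt α (α' a) a)
    (hβ : ∀ a ∈ I, HasDerivAt β (β' a) a)
    (hP1f : ∀ a ∈ I, P1 (f a) = a ^ 2)
    (hP2f : ∀ a ∈ I, P2 (f a) = b)
    (hEL : ∀ a ∈ I, fderiv ℝ W (f a)
        = α a • fderiv ℝ P1 (f a) + β a • fderiv ℝ P2 (f a)) :
    ∀ a ∈ I,
      fderiv ℝ (fderiv ℝ W) (f a) (f' a) (f' a)
        - α a * (fderiv ℝ (fderiv ℝ P1) (f a) (f' a) (f' a))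
        - β a * (fderiv ℝ (fderiv ℝ P2) (f a) (f' a) (f' a))
      = 2 * a * α' a :=
  second_variation_identity_along_constrained_family_general W P1 P2 hW hP1 hP2 I hIopen b f f' f''
    α β α' hf hf' hα hP1f hP2f hEL
end

section
/- Abstract form of the first assertion of Lemma 4.1 (vanishing of the third variation of the penalized Willmore functional): Let E be a real normed vector space, W, P1, P2 : E → ℝ three times continuously Fréchet differentiable, ã₀ > 0, b ∈ ℝ. Let f : [0,ã₀) → E be twice continuously differentiable (one-sided at 0) and α, β : [0,ã₀) → ℝ continuously differentiable with α'(0) = β'(0) = 0. Assume for every ã ∈ [0,ã₀): P1(f(ã)) = ã², P2(f(ã)) = b, and DW(f(ã)) = α(ã)·DP1(f(ã)) + β(ã)·DP2(f(ã)). Assume moreover the kernel condition: with φ := f'(0), D²W(f(0))(φ,v) − α(0)·D²P1(f(0))(φ,v) − β(0)·D²P2(f(0))(φ,v) = 0 for all v ∈ E. Then D³W(f(0))(φ,φ,φ) − α(0)·D³P1(f(0))(φ,φ,φ) − β(0)·D³P2(f(0))(φ,φ,φ) = 0. -/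
/-!
Differentiating the Euler–Lagrange equation along the curve `f`, tested on the fixed vector
`φ = f'(0)`, gives
`D²W(f a)(f' a, φ) = α' a · DP1(f a) φ + α a · D²P1(f a)(f' a, φ) + (the same for β, P2)`
for every `a`. Differentiating the constraints at `0` gives `DP1(f 0) φ = DP2(f 0) φ = 0`, so
together with `α'(0) = β'(0) = 0` the products `α' · DP1(f ·) φ` have derivative `0` at `0`
although `α'` is only continuous. Differentiating the identity once more at `0` therefore yields
the penalized third variation in direction `φ` plus the penalized second variation at
`(f''(0), φ)`; by symmetry of second derivatives the latter is killed by the kernel condition.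
-/

open Set

section CurveCalculus

variable {E F : Type*} [NormedAddCommGroup E] [NormedSpace ℝ E]
  [NormedAddCommGroup F] [NormedSpace ℝ F] {S : Set ℝ} {x : ℝ}

theorem HasDerivWithinAt.eq_zero_of_forall_eq_const {g : ℝ → F} {g' c : F}
    (h : HasDerivWithinAt g g' S x) (hg : ∀ a ∈ S, g a = c) (hx : x ∈ S)
    (hS : UniqueDiffWithinAt ℝ S x) : g' = 0 :=
  hS.eq_deriv S h ((hasDerivWithinAt_const x S c).congr hg (hg x hx))

theorem HasDerivWithinAt.smul_of_continuousWithinAt_of_eq_zero {g : ℝ → ℝ} {u : ℝ → F} {u' : F}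
    (hg : ContinuousWithinAt g S x) (hg0 : g x = 0) (hu : HasDerivWithinAt u u' S x)
    (hu0 : u x = 0) : HasDerivWithinAt (fun a => g a • u a) 0 S x := by
  rw [hasDerivWithinAt_iff_isLittleO]
  have hg_small : g =o[nhdsWithin x S] (fun _ => (1 : ℝ)) :=
    (Asymptotics.isLittleO_one_iff ℝ).mpr (by simpa [hg0] using hg.tendsto)
  have hu_lin : u =O[nhdsWithin x S] (fun a => a - x) := by
    simpa [hu0, Function.comp_def] using hu.isBigO_sub
  simpa [hg0, hu0] using hg_small.smul_isBigO hu_lin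

theorem fderiv_apply_eq_of_comp_hasDerivWithinAt {Φ : E → F} {γ : ℝ → E} {u : E} {c : F}
    (hΦ : DifferentiableAt ℝ Φ (γ x)) (hγ : HasDerivWithinAt γ u S x)
    (hS : UniqueDiffWithinAt ℝ S x) (h : HasDerivWithinAt (fun a => Φ (γ a)) c S x) :
    fderiv ℝ Φ (γ x) u = c :=
  hS.eq_deriv S (hΦ.hasFDerivAt.comp_hasDerivWithinAt x hγ) h

theorem hasDerivWithinAt_fderiv_comp_apply {Φ : E → F} (hΦ : ContDiff ℝ 2 Φ) {γ : ℝ → E} {u : E}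
    (hγ : HasDerivWithinAt γ u S x) (v : E) :
    HasDerivWithinAt (fun a => fderiv ℝ Φ (γ a) v) (fderiv ℝ (fderiv ℝ Φ) (γ x) u v) S x := by
  have hDΦ : DifferentiableAt ℝ (fderiv ℝ Φ) (γ x) :=
    (hΦ.fderiv_right (m := 1) le_rfl).differentiable one_ne_zero (γ x)
  simpa using (hDΦ.hasFDerivAt.comp_hasDerivWithinAt x hγ).clm_apply (hasDerivWithinAt_const x S v)

theorem hasDerivWithinAt_fderiv_fderiv_comp_apply {Φ : E → F} (hΦ : ContDiff ℝ 3 Φ)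
    {γ δ : ℝ → E} {u w : E} (hγ : HasDerivWithinAt γ u S x) (hδ : HasDerivWithinAt δ w S x)
    (v : E) :
    HasDerivWithinAt (fun a => fderiv ℝ (fderiv ℝ Φ) (γ a) (δ a) v)
      (fderiv ℝ (fderiv ℝ (fderiv ℝ Φ)) (γ x) u (δ x) v + fderiv ℝ (fderiv ℝ Φ) (γ x) w v)
      S x := by
  have hD2Φ : DifferentiableAt ℝ (fderiv ℝ (fderiv ℝ Φ)) (γ x) :=
    ((hΦ.fderiv_right (m := 2) (by norm_num)).fderiv_right (m := 1) le_rfl).differentiable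
      one_ne_zero (γ x)
  have hD2Φγ : HasDerivWithinAt (fun a => fderiv ℝ (fderiv ℝ Φ) (γ a))
      (fderiv ℝ (fderiv ℝ (fderiv ℝ Φ)) (γ x) u) S x :=
    hD2Φ.hasFDerivAt.comp_hasDerivWithinAt (l := fderiv ℝ (fderiv ℝ Φ)) x hγ
  simpa using (hD2Φγ.clm_apply hδ).clm_apply (hasDerivWithinAt_const x S v)

end CurveCalculus

section EulerLagrange

variable {E : Type*} [NormedAddCommGroup E] [NormedSpace ℝ E] {W P1 P2 : E → ℝ} {S : Set ℝ}
  {f f' : ℝ → E} {α β α' β' : ℝ → ℝ} {x : ℝ}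

theorem fderiv_fderiv_apply_eq_of_euler_lagrange (hW : ContDiff ℝ 2 W) (hP1 : ContDiff ℝ 2 P1)
    (hP2 : ContDiff ℝ 2 P2) (hx : x ∈ S) (hS : UniqueDiffWithinAt ℝ S x)
    (hf : HasDerivWithinAt f (f' x) S x) (hα : HasDerivWithinAt α (α' x) S x)
    (hβ : HasDerivWithinAt β (β' x) S x)
    (hEL : ∀ a ∈ S, fderiv ℝ W (f a) = α a • fderiv ℝ P1 (f a) + β a • fderiv ℝ P2 (f a))
    (v : E) :
    fderiv ℝ (fderiv ℝ W) (f x) (f' x) v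
      = α' x * fderiv ℝ P1 (f x) v + α x * fderiv ℝ (fderiv ℝ P1) (f x) (f' x) v
        + (β' x * fderiv ℝ P2 (f x) v + β x * fderiv ℝ (fderiv ℝ P2) (f x) (f' x) v) := by
  have hderiv := ((hasDerivWithinAt_fderiv_comp_apply hW hf v).sub
    (hα.mul (hasDerivWithinAt_fderiv_comp_apply hP1 hf v))).sub
    (hβ.mul (hasDerivWithinAt_fderiv_comp_apply hP2 hf v))
  have hzero := hderiv.eq_zero_of_forall_eq_const (c := 0) (fun a ha => by simp [hEL a ha]) hx hS
  linear_combination hzero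

theorem fderiv_fderiv_fderiv_apply_eq_of_euler_lagrange (hW : ContDiff ℝ 3 W)
    (hP1 : ContDiff ℝ 3 P1) (hP2 : ContDiff ℝ 3 P2) (hS : UniqueDiffOn ℝ S) (hx : x ∈ S)
    {w : E} (hf : ∀ a ∈ S, HasDerivWithinAt f (f' a) S a) (hf' : HasDerivWithinAt f' w S x)
    (hα : ∀ a ∈ S, HasDerivWithinAt α (α' a) S a) (hβ : ∀ a ∈ S, HasDerivWithinAt β (β' a) S a)
    (hα' : ContinuousWithinAt α' S x) (hβ' : ContinuousWithinAt β' S x)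
    (hα'x : α' x = 0) (hβ'x : β' x = 0)
    (hEL : ∀ a ∈ S, fderiv ℝ W (f a) = α a • fderiv ℝ P1 (f a) + β a • fderiv ℝ P2 (f a))
    {v : E} (hP1v : fderiv ℝ P1 (f x) v = 0) (hP2v : fderiv ℝ P2 (f x) v = 0) :
    fderiv ℝ (fderiv ℝ (fderiv ℝ W)) (f x) (f' x) (f' x) v + fderiv ℝ (fderiv ℝ W) (f x) w v
      = α x * (fderiv ℝ (fderiv ℝ (fderiv ℝ P1)) (f x) (f' x) (f' x) v
          + fderiv ℝ (fderiv ℝ P1) (f x) w v)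
        + β x * (fderiv ℝ (fderiv ℝ (fderiv ℝ P2)) (f x) (f' x) (f' x) v
          + fderiv ℝ (fderiv ℝ P2) (f x) w v) := by
  have hfx := hf x hx
  have hP1' : HasDerivWithinAt (fun a => α' a * fderiv ℝ P1 (f a) v) 0 S x :=
    HasDerivWithinAt.smul_of_continuousWithinAt_of_eq_zero hα' hα'x
      (hasDerivWithinAt_fderiv_comp_apply (hP1.of_le (by norm_num)) hfx v) hP1v
  have hP2' : HasDerivWithinAt (fun a => β' a * fderiv ℝ P2 (f a) v) 0 S x :=
    HasDerivWithinAt.smul_of_continuousWithinAt_of_eq_zero hβ' hβ'x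
      (hasDerivWithinAt_fderiv_comp_apply (hP2.of_le (by norm_num)) hfx v) hP2v
  have hderiv := ((hasDerivWithinAt_fderiv_fderiv_comp_apply hW hfx hf' v).sub
    ((hP1'.add ((hα x hx).mul (hasDerivWithinAt_fderiv_fderiv_comp_apply hP1 hfx hf' v))).add
      (hP2'.add ((hβ x hx).mul (hasDerivWithinAt_fderiv_fderiv_comp_apply hP2 hfx hf' v)))))
  have hzero := hderiv.eq_zero_of_forall_eq_const (c := 0) (fun a ha => sub_eq_zero.mpr
    (fderiv_fderiv_apply_eq_of_euler_lagrange (hW.of_le (by norm_num))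
      (hP1.of_le (by norm_num)) (hP2.of_le (by norm_num)) ha (hS a ha) (hf a ha) (hα a ha)
      (hβ a ha) hEL v)) hx (hS x hx)
  rw [hα'x, hβ'x] at hzero
  linear_combination hzero

end EulerLagrange

theorem third_variation_penalized_functional_vanishes_general
    {E : Type*} [NormedAddCommGroup E] [NormedSpace ℝ E]
    (W P1 P2 : E → ℝ)
    (hW : ContDiff ℝ 3 W) (hP1 : ContDiff ℝ 3 P1) (hP2 : ContDiff ℝ 3 P2)
    (a₀ : ℝ) (ha₀ : 0 < a₀) (b : ℝ)
    (f f' f'' : ℝ → E) (α β α' β' : ℝ → ℝ)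
    (hf : ∀ a ∈ Ico (0:ℝ) a₀, HasDerivWithinAt f (f' a) (Ico (0:ℝ) a₀) a)
    (hf' : ∀ a ∈ Ico (0:ℝ) a₀, HasDerivWithinAt f' (f'' a) (Ico (0:ℝ) a₀) a)
    (hα : ∀ a ∈ Ico (0:ℝ) a₀, HasDerivWithinAt α (α' a) (Ico (0:ℝ) a₀) a)
    (hβ : ∀ a ∈ Ico (0:ℝ) a₀, HasDerivWithinAt β (β' a) (Ico (0:ℝ) a₀) a)
    (hα'cont : ContinuousOn α' (Ico (0:ℝ) a₀))
    (hβ'cont : ContinuousOn β' (Ico (0:ℝ) a₀))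
    (hα'0 : α' 0 = 0) (hβ'0 : β' 0 = 0)
    (hP1f : ∀ a ∈ Ico (0:ℝ) a₀, P1 (f a) = a ^ 2)
    (hP2f : ∀ a ∈ Ico (0:ℝ) a₀, P2 (f a) = b)
    (hEL : ∀ a ∈ Ico (0:ℝ) a₀, fderiv ℝ W (f a)
        = α a • fderiv ℝ P1 (f a) + β a • fderiv ℝ P2 (f a))
    (hker : ∀ v : E,
      fderiv ℝ (fderiv ℝ W) (f 0) (f' 0) v
        - α 0 * (fderiv ℝ (fderiv ℝ P1) (f 0) (f' 0) v)
        - β 0 * (fderiv ℝ (fderiv ℝ P2) (f 0) (f' 0) v) = 0) :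
    fderiv ℝ (fderiv ℝ (fderiv ℝ W)) (f 0) (f' 0) (f' 0) (f' 0)
      - α 0 * (fderiv ℝ (fderiv ℝ (fderiv ℝ P1)) (f 0) (f' 0) (f' 0) (f' 0))
      - β 0 * (fderiv ℝ (fderiv ℝ (fderiv ℝ P2)) (f 0) (f' 0) (f' 0) (f' 0))
    = 0 := by
  set S := Ico (0:ℝ) a₀
  have h0 : (0:ℝ) ∈ S := ⟨le_rfl, ha₀⟩
  have hS : UniqueDiffOn ℝ S := uniqueDiffOn_Ico 0 a₀
  have hP1φ : fderiv ℝ P1 (f 0) (f' 0) = 0 :=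
    fderiv_apply_eq_of_comp_hasDerivWithinAt (hP1.differentiable (by norm_num) _) (hf 0 h0)
      (hS 0 h0) <| ((hasDerivAt_pow 2 (0:ℝ)).hasDerivWithinAt.congr hP1f (hP1f 0 h0)).congr_deriv
        (by norm_num)
  have hP2φ : fderiv ℝ P2 (f 0) (f' 0) = 0 :=
    fderiv_apply_eq_of_comp_hasDerivWithinAt (hP2.differentiable (by norm_num) _) (hf 0 h0)
      (hS 0 h0) <| (hasDerivWithinAt_const 0 S b).congr hP2f (hP2f 0 h0)
  have h3 := fderiv_fderiv_fderiv_apply_eq_of_euler_lagrange hW hP1 hP2 hS h0 hf (hf' 0 h0)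
    hα hβ (hα'cont 0 h0) (hβ'cont 0 h0) hα'0 hβ'0 hEL hP1φ hP2φ
  have hsymm {Φ : E → ℝ} (hΦ : ContDiff ℝ 3 Φ) :
      fderiv ℝ (fderiv ℝ Φ) (f 0) (f'' 0) (f' 0) = fderiv ℝ (fderiv ℝ Φ) (f 0) (f' 0) (f'' 0) :=
    hΦ.contDiffAt.isSymmSndFDerivAt (by norm_num) (f'' 0) (f' 0)
  linear_combination h3 - hker (f'' 0) - hsymm hW + α 0 * hsymm hP1 + β 0 * hsymm hP2

/-- Abstract form of the first assertion of Lemma 4.1: vanishing of the third variation of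
the penalized Willmore functional on the limiting kernel direction `φ = f'(0)`.
Here `a` plays the role of `ã` (the square root of the first conformal coordinate). -/
theorem third_variation_penalized_functional_vanishes
    {E : Type*} [NormedAddCommGroup E] [NormedSpace ℝ E]
    (W P1 P2 : E → ℝ)
    (hW : ContDiff ℝ 3 W) (hP1 : ContDiff ℝ 3 P1) (hP2 : ContDiff ℝ 3 P2)
    (a₀ : ℝ) (ha₀ : 0 < a₀) (b : ℝ)
    (f f' f'' : ℝ → E) (α β α' β' : ℝ → ℝ)
    (hf : ∀ a ∈ Ico (0:ℝ) a₀, HasDerivWithinAt f (f' a) (Ico (0:ℝ) a₀) a)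
    (hf' : ∀ a ∈ Ico (0:ℝ) a₀, HasDerivWithinAt f' (f'' a) (Ico (0:ℝ) a₀) a)
    (hf''cont : ContinuousOn f'' (Ico (0:ℝ) a₀))
    (hα : ∀ a ∈ Ico (0:ℝ) a₀, HasDerivWithinAt α (α' a) (Ico (0:ℝ) a₀) a)
    (hβ : ∀ a ∈ Ico (0:ℝ) a₀, HasDerivWithinAt β (β' a) (Ico (0:ℝ) a₀) a)
    (hα'cont : ContinuousOn α' (Ico (0:ℝ) a₀))
    (hβ'cont : ContinuousOn β' (Ico (0:ℝ) a₀))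
    (hα'0 : α' 0 = 0) (hβ'0 : β' 0 = 0)
    (hP1f : ∀ a ∈ Ico (0:ℝ) a₀, P1 (f a) = a ^ 2)
    (hP2f : ∀ a ∈ Ico (0:ℝ) a₀, P2 (f a) = b)
    (hEL : ∀ a ∈ Ico (0:ℝ) a₀, fderiv ℝ W (f a)
        = α a • fderiv ℝ P1 (f a) + β a • fderiv ℝ P2 (f a))
    (hker : ∀ v : E,
      fderiv ℝ (fderiv ℝ W) (f 0) (f' 0) v
        - α 0 * (fderiv ℝ (fderiv ℝ P1) (f 0) (f' 0) v)
        - β 0 * (fderiv ℝ (fderiv ℝ P2) (f 0) (f' 0) v) = 0) :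
    fderiv ℝ (fderiv ℝ (fderiv ℝ W)) (f 0) (f' 0) (f' 0) (f' 0)
      - α 0 * (fderiv ℝ (fderiv ℝ (fderiv ℝ P1)) (f 0) (f' 0) (f' 0) (f' 0))
      - β 0 * (fderiv ℝ (fderiv ℝ (fderiv ℝ P2)) (f 0) (f' 0) (f' 0) (f' 0))
    = 0 :=
  third_variation_penalized_functional_vanishes_general W P1 P2 hW hP1 hP2 a₀ ha₀ b f f' f'' α β α'
    β' hf hf' hα hβ hα'cont hβ'cont hα'0 hβ'0 hP1f hP2f hEL hker
end

section
/- Stability of the Clifford torus for the penalized Willmore functional below the critical multiplier: for every real number α̃ with 0 ≤ α̃ ≤ 5/2 and all natural numbers k, l with (k,l) ≠ (0,0), one has h(α̃,k,l) := 2(k²+l²)² − 6(k²+l²) + 4 − 8α̃kl + 16α̃kl/(k²+l²) ≥ 0. -/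
/-- The coefficient of the second variation of the penalized Willmore functional
`W − 4π²α̃·Π¹` at the Clifford torus on an extremal Fourier mode of type `(k,l)`. -/
noncomputable def h (α : ℝ) (k l : ℕ) : ℝ :=
  2 * ((k:ℝ)^2 + (l:ℝ)^2)^2 - 6 * ((k:ℝ)^2 + (l:ℝ)^2) + 4
    - 8 * α * k * l + 16 * α * k * l / ((k:ℝ)^2 + (l:ℝ)^2)

lemma natkey (k l : ℕ) :
    10*k*l*((k^2+l^2)-2) ≤ (k^2+l^2)*((k^2+l^2)-1)*((k^2+l^2)-2) := by
  by_cases hs : k^2+l^2 ≤ 5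
  · have hk : k ≤ 2 := by nlinarith
    have hl : l ≤ 2 := by nlinarith
    interval_cases k <;> interval_cases l <;> decide
  · push_neg at hs
    have h2 : 2*k*l ≤ k^2+l^2 := by nlinarith [two_mul_le_add_sq k l]
    have h10 : 10*k*l ≤ (k^2+l^2)*((k^2+l^2)-1) := by
      have h5 : 5 ≤ (k^2+l^2)-1 := by omega
      calc 10*k*l = 5*(2*k*l) := by ring
        _ ≤ 5*(k^2+l^2) := Nat.mul_le_mul_left 5 h2
        _ = (k^2+l^2)*5 := by ring
        _ ≤ (k^2+l^2)*((k^2+l^2)-1) := Nat.mul_le_mul_left _ h5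
    exact Nat.mul_le_mul_right _ h10

lemma realkey (k l : ℕ) (hs2 : 2 ≤ k^2+l^2) :
    10*(k:ℝ)*l*(((k:ℝ)^2+(l:ℝ)^2)-2)
      ≤ ((k:ℝ)^2+(l:ℝ)^2)*(((k:ℝ)^2+(l:ℝ)^2)-1)*(((k:ℝ)^2+(l:ℝ)^2)-2) := by
  have := natkey k l
  have h1 : 1 ≤ k^2+l^2 := by omega
  have hcast := (Nat.cast_le (α := ℝ)).mpr this
  push_cast [Nat.cast_sub hs2, Nat.cast_sub h1] at hcast
  convert hcast using 1 <;> push_cast <;> ring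

/-- Stability of the Clifford torus for the penalized Willmore functional below the critical
multiplier: for `0 ≤ α̃ ≤ 5/2` and every mode `(k,l) ≠ (0,0)`, `h(α̃,k,l) ≥ 0`. -/
theorem clifford_stability_below_critical_multiplier
    (α : ℝ) (hα0 : 0 ≤ α) (hα : α ≤ 5/2) :
    ∀ k l : ℕ, (k, l) ≠ (0, 0) → 0 ≤ h α k l := by
  intro k l hkl
  have hne : ¬(k = 0 ∧ l = 0) := by
    intro ⟨h1, h2⟩; exact hkl (by simp [h1, h2])
  have hs1 : 1 ≤ k^2 + l^2 := by
    rcases Nat.eq_zero_or_pos k with hk | hk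
    · have : l ≠ 0 := fun hl => hne ⟨hk, hl⟩
      nlinarith [Nat.one_le_iff_ne_zero.mpr this]
    · nlinarith
  rcases eq_or_lt_of_le hs1 with hs | hs
  · -- k^2 + l^2 = 1
    have hk : k ≤ 1 := by nlinarith
    have hl : l ≤ 1 := by nlinarith
    interval_cases k <;> interval_cases l <;> first
      | omega
      | (unfold h; norm_num)
  · -- 2 ≤ k^2 + l^2
    have hs2 : 2 ≤ k^2 + l^2 := hs
    have hSpos : (0:ℝ) < (k:ℝ)^2 + (l:ℝ)^2 := by
      have : (1:ℝ) ≤ ((k^2 + l^2 : ℕ) : ℝ) := by exact_mod_cast hs1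
      push_cast at this
      linarith
    have hS2 : (2:ℝ) ≤ (k:ℝ)^2 + (l:ℝ)^2 := by
      have : (2:ℝ) ≤ ((k^2 + l^2 : ℕ) : ℝ) := by exact_mod_cast hs2
      push_cast at this
      linarith
    have hklnn : (0:ℝ) ≤ (k:ℝ)*l := by positivity
    have hkey := realkey k l hs2
    have hmul : h α k l * ((k:ℝ)^2 + (l:ℝ)^2)
        = 2*((k:ℝ)^2+(l:ℝ)^2)^3 - 6*((k:ℝ)^2+(l:ℝ)^2)^2 + 4*((k:ℝ)^2+(l:ℝ)^2)
          - 8*α*k*l*((k:ℝ)^2+(l:ℝ)^2) + 16*α*k*l := by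
      rw [h]
      field_simp
    have hprod : 0 * ((k:ℝ)^2 + (l:ℝ)^2) ≤ h α k l * ((k:ℝ)^2 + (l:ℝ)^2) := by
      rw [hmul, zero_mul]
      nlinarith [hkey, mul_nonneg (mul_nonneg (by linarith : (0:ℝ) ≤ 20 - 8*α) hklnn)
        (by linarith : (0:ℝ) ≤ ((k:ℝ)^2+(l:ℝ)^2) - 2)]
    exact le_of_mul_le_mul_right hprod hSpos
end

section
/- Characterization of the null Fourier modes at the critical multiplier α̃ = 5/2 (the kernel of δ²W_{10π²}(f¹) consists of the Möbius modes (1,0),(0,1),(1,1) and the two non-Möbius modes (1,2),(2,1)): for natural numbers k, l with (k,l) ≠ (0,0), one has h(5/2,k,l) = 0 if and only if (k,l) ∈ {(1,0),(0,1),(1,1),(1,2),(2,1)}. -/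
lemma h_pos_of_big (k l : ℕ) (hs : 8 ≤ k^2 + l^2) : 0 < h (5/2) k l := by
  have hsR : (8:ℝ) ≤ (k:ℝ)^2 + (l:ℝ)^2 := by exact_mod_cast hs
  have hspos : (0:ℝ) < (k:ℝ)^2 + (l:ℝ)^2 := by linarith
  have hdiv : (0:ℝ) ≤ 16 * (5/2) * k * l / ((k:ℝ)^2 + (l:ℝ)^2) := by positivity
  have hkl2 : 2 * ((k:ℝ) * l) ≤ (k:ℝ)^2 + (l:ℝ)^2 := by nlinarith [sq_nonneg ((k:ℝ) - l)]
  unfold h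
  nlinarith [sq_nonneg ((k:ℝ)^2 + (l:ℝ)^2 - 4)]

/-- Characterization of the null Fourier modes at the critical multiplier `α̃ = 5/2`: the
kernel of `δ²W_{10π²}(f¹)` consists of the Möbius modes `(1,0),(0,1),(1,1)` and the two
non-Möbius modes `(1,2),(2,1)`. -/
theorem null_modes_at_critical_multiplier (k l : ℕ) (hkl : (k, l) ≠ (0, 0)) :
    h (5/2) k l = 0
      ↔ (k, l) ∈ ({(1,0), (0,1), (1,1), (1,2), (2,1)} : Set (ℕ × ℕ)) := by
  constructor
  · intro hz
    by_cases hbig : 8 ≤ k^2 + l^2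
    · linarith [h_pos_of_big k l hbig]
    · push_neg at hbig
      have hk : k ≤ 2 := by nlinarith
      have hl : l ≤ 2 := by nlinarith
      interval_cases k <;> interval_cases l <;>
        simp_all [h] <;> norm_num at hz
  · intro hm
    simp only [Set.mem_insert_iff, Set.mem_singleton_iff, Prod.mk.injEq] at hm
    rcases hm with ⟨rfl, rfl⟩ | ⟨rfl, rfl⟩ | ⟨rfl, rfl⟩ | ⟨rfl, rfl⟩ | ⟨rfl, rfl⟩ <;>
      norm_num [h]
end

section
/- Arithmetic form of Lemma 3.1 (α¹ = 10π², i.e. α̃ = 5/2 is the maximal penalization for which the Clifford torus remains stable): the set { α̃ ∈ ℝ : α̃ ≥ 0 and h(α̃,k,l) ≥ 0 for all natural numbers k, l with (k,l) ≠ (0,0) } equals the closed interval [0, 5/2]. In particular, for every α̃ > 5/2 there is a mode with negative coefficient, namely h(α̃,1,2) = 24 − (48/5)·α̃ < 0. -/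
lemma h_eq_mul_div (α : ℝ) {k l : ℕ} (hs : (k:ℝ)^2 + l^2 ≠ 0) :
    h α k l = ((k:ℝ)^2 + l^2 - 2) * (2 * ((k:ℝ)^2 + l^2) * ((k:ℝ)^2 + l^2 - 1) - 8 * α * k * l)
      / ((k:ℝ)^2 + l^2) := by
  rw [h]
  field_simp
  ring

lemma h_one_two (α : ℝ) : h α 1 2 = 24 - 48/5 * α := by
  norm_num [h]
  ring

lemma mul_mul_sq_add_sq_sub_two_nonneg (k l : ℕ) :
    0 ≤ (k:ℝ) * l * ((k:ℝ)^2 + l^2 - 2) := by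
  have hkl : 0 ≤ ((k * l : ℕ) : ℝ) * ((k * l : ℕ) - 1) := by
    rcases Nat.eq_zero_or_pos (k * l) with h0 | hpos
    · simp [h0]
    · have : (1:ℝ) ≤ (k * l : ℕ) := by exact_mod_cast hpos
      positivity
  push_cast at hkl
  nlinarith [mul_nonneg (mul_nonneg k.cast_nonneg l.cast_nonneg) (sq_nonneg ((k:ℝ) - l))]

lemma sq_add_sq_sub_two_mul_nonneg (k l : ℕ) :
    0 ≤ ((k:ℝ)^2 + l^2 - 2) * (((k:ℝ)^2 + l^2) * ((k:ℝ)^2 + l^2 - 1) - 10 * k * l) := by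
  by_cases hsmall : k ≤ 2 ∧ l ≤ 2
  · obtain ⟨hk, hl⟩ := hsmall
    interval_cases k <;> interval_cases l <;> norm_num
  · have hs : (9:ℝ) ≤ (k:ℝ)^2 + l^2 := by
      rcases not_and_or.mp hsmall with hk | hl
      · have : (3:ℝ) ≤ k := by exact_mod_cast not_le.mp hk
        nlinarith [sq_nonneg (l:ℝ)]
      · have : (3:ℝ) ≤ l := by exact_mod_cast not_le.mp hl
        nlinarith [sq_nonneg (k:ℝ)]
    have hkl : 2 * ((k:ℝ) * l) ≤ (k:ℝ)^2 + l^2 := by nlinarith [sq_nonneg ((k:ℝ) - l)]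
    have hkl0 : 0 ≤ (k:ℝ) * l := by positivity
    apply mul_nonneg (by linarith)
    nlinarith

lemma h_nonneg_of_le_five_halves {α : ℝ} (hα : α ≤ 5/2) (k l : ℕ) : 0 ≤ h α k l := by
  rcases eq_or_ne ((k:ℝ)^2 + l^2) 0 with hs | hs
  -- `k = l = 0`: the quotient term is the junk value `x / 0 = 0`, and `h α 0 0 = 4`.
  · have hk : (k:ℝ) = 0 := by nlinarith [sq_nonneg (k:ℝ), sq_nonneg (l:ℝ)]
    have hl : (l:ℝ) = 0 := by nlinarith [sq_nonneg (k:ℝ), sq_nonneg (l:ℝ)]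
    norm_num [h, hk, hl]
  rw [h_eq_mul_div α hs]
  refine div_nonneg ?_ (by positivity)
  calc (0:ℝ)
      ≤ 2 * (((k:ℝ)^2 + l^2 - 2) * (((k:ℝ)^2 + l^2) * ((k:ℝ)^2 + l^2 - 1) - 10 * k * l))
        + 8 * (5/2 - α) * ((k:ℝ) * l * ((k:ℝ)^2 + l^2 - 2)) := by
        have := sq_add_sq_sub_two_mul_nonneg k l
        have := mul_mul_sq_add_sq_sub_two_nonneg k l
        have : 0 ≤ 5/2 - α := by linarith
        positivity
    _ = _ := by ring

/-- Arithmetic form of Lemma 3.1 (`α¹ = 10π²`, i.e. `α̃ = 5/2` is the maximal penalization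
keeping the Clifford torus stable): the set of nonnegative `α̃` with `h(α̃,k,l) ≥ 0` for all
modes `(k,l) ≠ (0,0)` is exactly `[0, 5/2]`; and for `α̃ > 5/2` the mode `(1,2)` is negative,
with `h(α̃,1,2) = 24 − (48/5)·α̃ < 0`. -/
theorem critical_multiplier_is_five_halves :
    {α : ℝ | 0 ≤ α ∧ ∀ k l : ℕ, (k, l) ≠ (0, 0) → 0 ≤ h α k l}
        = Set.Icc (0:ℝ) (5/2)
    ∧ ∀ α : ℝ, 5/2 < α → (h α 1 2 = 24 - 48/5 * α ∧ h α 1 2 < 0) := by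
  refine ⟨Set.ext fun α => ⟨fun ⟨hα0, hmodes⟩ => ⟨hα0, ?_⟩,
    fun ⟨hα0, hα⟩ => ⟨hα0, fun k l _ => h_nonneg_of_le_five_halves hα k l⟩⟩,
    fun α hα => ⟨h_one_two α, by rw [h_one_two]; linarith⟩⟩
  have := hmodes 1 2 (by simp)
  rw [h_one_two] at this
  linarith
end

section
/- The case c = k > 1, l = 1 of the paper's stability analysis: for every integer k ≥ 2 and every real number α̃ ≥ 0, one has h(α̃,k,1) ≥ 0 if and only if α̃ ≤ (k³ + k)/4. In particular, since k ↦ (k³+k)/4 is increasing, the minimum over integers k ≥ 2 of the threshold is attained at k = 2 with value 5/2. -/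
/-! With `s = k² + l²`, the coefficient factors as `h = 2(s-2)/s · (s(s-1) - 4α̃kl)`: both the
`α̃`-free part `2(s-1)(s-2)` and the `α̃`-part `-8α̃kl(s-2)/s` vanish at `s = 2`. Hence away from
the diagonal mode `(1,1)` the sign of `h` is that of `s(s-1)/(4kl) - α̃`, and for `l = 1` this
threshold is `(k²+1)k²/(4k) = (k³+k)/4`, which is increasing in `k`. -/

theorem h_eq_mul (α : ℝ) (k l : ℕ) (hs : (k:ℝ)^2 + (l:ℝ)^2 ≠ 0) :
    h α k l = 2 * ((k:ℝ)^2 + l^2 - 2) / ((k:ℝ)^2 + l^2) *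
      (((k:ℝ)^2 + l^2) * ((k:ℝ)^2 + l^2 - 1) - 4 * α * k * l) := by
  unfold h
  field_simp
  ring

theorem nonneg_h_iff (α : ℝ) {k l : ℕ} (hk : 0 < k) (hl : 0 < l) (hs : 2 < k^2 + l^2) :
    0 ≤ h α k l ↔ α ≤ ((k:ℝ)^2 + l^2) * ((k:ℝ)^2 + l^2 - 1) / (4 * k * l) := by
  have hs' : (2:ℝ) < (k:ℝ)^2 + l^2 := by exact_mod_cast hs
  have hkl : (0:ℝ) < 4 * k * l := by positivity
  have hfactor : 0 < 2 * ((k:ℝ)^2 + l^2 - 2) / ((k:ℝ)^2 + l^2) := by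
    apply div_pos <;> linarith
  rw [h_eq_mul α k l (by positivity), mul_nonneg_iff_of_pos_left hfactor, le_div_iff₀ hkl,
    sub_nonneg]
  constructor <;> intro <;> linarith

theorem nonneg_h_one_iff (α : ℝ) {k : ℕ} (hk : 2 ≤ k) :
    0 ≤ h α k 1 ↔ α ≤ ((k:ℝ)^3 + k) / 4 := by
  have hk0 : (k:ℝ) ≠ 0 := by positivity
  rw [nonneg_h_iff α (by omega) one_pos (by nlinarith)]
  convert Iff.rfl using 2
  field_simp
  ring

theorem monotone_cube_add_self_div_four : Monotone fun x : ℝ => (x^3 + x) / 4 := by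
  intro x y hxy
  have hcube : x^3 ≤ y^3 := (Odd.strictMono_pow (by decide : Odd 3)).monotone hxy
  dsimp only
  linarith

/-- The case `c = k > 1`, `l = 1` of the stability analysis: for every integer `k ≥ 2` and
`α̃ ≥ 0`, `h(α̃,k,1) ≥ 0` iff `α̃ ≤ (k³+k)/4`; the threshold `(k³+k)/4` is increasing in `k`
and its minimum over `k ≥ 2` is attained at `k = 2` with value `5/2`. -/
theorem off_diagonal_stability_iff :
    (∀ k : ℕ, 2 ≤ k → ∀ α : ℝ, 0 ≤ α →
      (0 ≤ h α k 1 ↔ α ≤ ((k:ℝ)^3 + k) / 4))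
    ∧ (∀ k k' : ℕ, 2 ≤ k → k ≤ k' → ((k:ℝ)^3 + k) / 4 ≤ ((k':ℝ)^3 + k') / 4)
    ∧ (∀ k : ℕ, 2 ≤ k → ((2:ℝ)^3 + 2) / 4 ≤ ((k:ℝ)^3 + k) / 4)
    ∧ ((2:ℝ)^3 + 2) / 4 = 5/2 := by
  have threshold_mono : Monotone fun k : ℕ => ((k:ℝ)^3 + k) / 4 :=
    monotone_cube_add_self_div_four.comp Nat.mono_cast
  refine ⟨fun k hk α _ => nonneg_h_one_iff α hk, fun k k' _ hkk' => threshold_mono hkk',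
    fun k hk => by exact_mod_cast threshold_mono hk, by norm_num⟩
end
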